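/- arXiv:1411.0773 — 2 statements merged into one kernel-verified Lean document; each statement's English description precedes it below -/
import Mathlib

section
/- Let X be a bounded random variable on a probability space and λ ∈ (0,1). Then the infimum over y ∈ ℝ of E[(X - y)₊] + λy is attained at y_X(λ) := inf{x ∈ ℝ : P(X > x) ≤ λ}. -/
/-!
For `c ≤ y` one has `(X - c)₊ ≤ (X - y)₊ + (y - c) 𝟙{X > c}`, and for `y ≤ c` one has
`(X - c)₊ + (c - y) 𝟙{X ≥ c} ≤ (X - y)₊`. Integrating, `c` minimises `y ↦ E[(X - y)₊] + λ y`
as soon as `P(X > c) ≤ λ ≤ P(X ≥ c)`. The upper quantile is such a point: the first inequality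
is the right-continuity of `x ↦ P(X > x)`, the second follows from `P(X > x) > λ` for every `x`
below the quantile by continuity from above of `P` along `{X > x}` as `x ↑ c`.
Boundedness of `X` makes the set defining the quantile nonempty and bounded below.
-/

open MeasureTheory
open scoped ENNReal

noncomputable section

variable {Ω : Type*} [MeasurableSpace Ω] {P : Measure Ω} {X : Ω → ℝ}

theorem measure_gt_le_of_forall_gt {a : ℝ} {c : ℝ≥0∞}
    (h : ∀ x, a < x → P {ω | X ω > x} ≤ c) : P {ω | X ω > a} ≤ c := by
  obtain ⟨u, hu_anti, hau, hu⟩ := exists_seq_strictAnti_tendsto a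
  have hunion : {ω | X ω > a} = ⋃ n, {ω | X ω > u n} := by
    ext ω
    simp only [Set.mem_iUnion]
    exact ⟨fun hω => (hu.eventually (gt_mem_nhds hω)).exists, fun ⟨n, hn⟩ => (hau n).trans hn⟩
  have hmono : Monotone fun n => {ω | X ω > u n} :=
    fun m n hmn ω hω => (hu_anti.antitone hmn).trans_lt hω
  rw [hunion, hmono.measure_iUnion]
  exact iSup_le fun n => h _ (hau n)

theorem le_measure_ge_of_forall_lt [IsFiniteMeasure P] (hX : AEMeasurable X P) {a : ℝ}
    {c : ℝ≥0∞} (h : ∀ x < a, c ≤ P {ω | X ω > x}) : c ≤ P {ω | X ω ≥ a} := by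
  obtain ⟨u, hu_mono, hua, hu⟩ := exists_seq_strictMono_tendsto a
  have hinter : {ω | X ω ≥ a} = ⋂ n, {ω | X ω > u n} := by
    ext ω
    simp only [Set.mem_iInter]
    refine ⟨fun hω n => (hua n).trans_le hω, fun hω => show a ≤ X ω from not_lt.1 fun hlt => ?_⟩
    obtain ⟨n, hn⟩ := (hu.eventually (lt_mem_nhds hlt)).exists
    exact (hω n).not_gt hn
  have hanti : Antitone fun n => {ω | X ω > u n} :=
    fun m n hmn ω hω => (hu_mono.monotone hmn).trans_lt hω
  rw [hinter, hanti.measure_iInter (fun n => hX.nullMeasurable measurableSet_Ioi)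
    ⟨0, measure_ne_top P _⟩]
  exact le_iInf fun n => h _ (hua n)

def upperQuantile (P : Measure Ω) (X : Ω → ℝ) (lam : ℝ) : ℝ :=
  sInf {x : ℝ | P.real {ω | X ω > x} ≤ lam}

theorem measureReal_gt_upperQuantile_le [IsFiniteMeasure P] {lam : ℝ}
    (hne : {x : ℝ | P.real {ω | X ω > x} ≤ lam}.Nonempty) :
    P.real {ω | X ω > upperQuantile P X lam} ≤ lam := by
  obtain ⟨s, hs⟩ := hne
  have hlam : 0 ≤ lam := measureReal_nonneg.trans hs
  rw [measureReal_def, ← ENNReal.le_ofReal_iff_toReal_le (measure_ne_top _ _) hlam]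
  refine measure_gt_le_of_forall_gt fun x hx => ?_
  obtain ⟨t, ht, htx⟩ := exists_lt_of_csInf_lt ⟨s, hs⟩ hx
  rw [ENNReal.le_ofReal_iff_toReal_le (measure_ne_top _ _) hlam]
  exact (measureReal_mono fun ω hω => htx.trans hω).trans ht

theorem le_measureReal_ge_upperQuantile [IsFiniteMeasure P] (hX : AEMeasurable X P) {lam : ℝ}
    (hbdd : BddBelow {x : ℝ | P.real {ω | X ω > x} ≤ lam}) :
    lam ≤ P.real {ω | X ω ≥ upperQuantile P X lam} := by
  rw [measureReal_def, ← ENNReal.ofReal_le_iff_le_toReal (measure_ne_top _ _)]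
  refine le_measure_ge_of_forall_lt hX fun x hx => ENNReal.ofReal_le_of_le_toReal ?_
  exact (not_le.1 fun hxS => hx.not_ge (csInf_le hbdd hxS)).le

def rockafellarUryasev (P : Measure Ω) (X : Ω → ℝ) (lam y : ℝ) : ℝ :=
  (∫ ω, max (X ω - y) 0 ∂P) + lam * y

theorem integrable_max_sub_const [IsFiniteMeasure P] (hX : Integrable X P) (y : ℝ) :
    Integrable (fun ω => max (X ω - y) 0) P :=
  (hX.sub (integrable_const y)).pos_part

theorem integral_add_indicator_const [IsFiniteMeasure P] {f : Ω → ℝ} (hf : Integrable f P)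
    {A : Set Ω} (hA : NullMeasurableSet A P) (k : ℝ) :
    ∫ ω, f ω + A.indicator (fun _ => k) ω ∂P = (∫ ω, f ω ∂P) + P.real A * k := by
  rw [integral_add hf ((integrable_const k).indicator₀ hA), integral_indicator₀ hA,
    setIntegral_const, smul_eq_mul]

theorem rockafellarUryasev_le_of_measureReal_gt_le [IsFiniteMeasure P] (hX : Integrable X P)
    {lam c y : ℝ} (hc : P.real {ω | X ω > c} ≤ lam) (hcy : c ≤ y) :
    rockafellarUryasev P X lam c ≤ rockafellarUryasev P X lam y := by
  set A := {ω | X ω > c}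
  have hA : NullMeasurableSet A P := hX.aemeasurable.nullMeasurable measurableSet_Ioi
  have hpt : ∀ ω, max (X ω - c) 0 ≤ max (X ω - y) 0 + A.indicator (fun _ => y - c) ω := by
    intro ω
    by_cases hω : ω ∈ A
    · rw [Set.indicator_of_mem hω]
      exact max_le (by linarith [le_max_left (X ω - y) 0]) (by linarith [le_max_right (X ω - y) 0])
    · rw [Set.indicator_of_notMem hω, add_zero]
      exact max_le (by linarith [show X ω ≤ c from not_lt.1 hω, le_max_right (X ω - y) 0])
        (le_max_right _ _)
  have hint : ∫ ω, max (X ω - c) 0 ∂P ≤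
      ∫ ω, max (X ω - y) 0 + A.indicator (fun _ => y - c) ω ∂P :=
    integral_mono (integrable_max_sub_const hX c)
      ((integrable_max_sub_const hX y).add ((integrable_const _).indicator₀ hA)) hpt
  rw [integral_add_indicator_const (integrable_max_sub_const hX y) hA] at hint
  unfold rockafellarUryasev
  nlinarith [mul_le_mul_of_nonneg_right hc (sub_nonneg.2 hcy)]

theorem rockafellarUryasev_le_of_le_measureReal_ge [IsFiniteMeasure P] (hX : Integrable X P)
    {lam c y : ℝ} (hc : lam ≤ P.real {ω | X ω ≥ c}) (hyc : y ≤ c) :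
    rockafellarUryasev P X lam c ≤ rockafellarUryasev P X lam y := by
  set B := {ω | X ω ≥ c}
  have hB : NullMeasurableSet B P := hX.aemeasurable.nullMeasurable measurableSet_Ici
  have hpt : ∀ ω, max (X ω - c) 0 + B.indicator (fun _ => c - y) ω ≤ max (X ω - y) 0 := by
    intro ω
    by_cases hω : ω ∈ B
    · rw [Set.indicator_of_mem hω, max_eq_left (sub_nonneg.2 (show c ≤ X ω from hω))]
      linarith [le_max_left (X ω - y) 0]
    · rw [Set.indicator_of_notMem hω, add_zero]
      exact max_le_max (by linarith) le_rfl
  have hint : ∫ ω, max (X ω - c) 0 + B.indicator (fun _ => c - y) ω ∂P ≤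
      ∫ ω, max (X ω - y) 0 ∂P :=
    integral_mono ((integrable_max_sub_const hX c).add ((integrable_const _).indicator₀ hB))
      (integrable_max_sub_const hX y) hpt
  rw [integral_add_indicator_const (integrable_max_sub_const hX c) hB] at hint
  unfold rockafellarUryasev
  nlinarith [mul_le_mul_of_nonneg_right hc (sub_nonneg.2 hyc)]

theorem isMinOn_rockafellarUryasev [IsFiniteMeasure P] (hX : Integrable X P) {lam c : ℝ}
    (hgt : P.real {ω | X ω > c} ≤ lam) (hge : lam ≤ P.real {ω | X ω ≥ c}) :
    IsMinOn (rockafellarUryasev P X lam) Set.univ c := fun y _ =>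
  (le_total c y).elim (rockafellarUryasev_le_of_measureReal_gt_le hX hgt)
    (rockafellarUryasev_le_of_le_measureReal_ge hX hge)

theorem isMinOn_rockafellarUryasev_upperQuantile [IsFiniteMeasure P] (hX : Integrable X P)
    {lam : ℝ} (hne : {x : ℝ | P.real {ω | X ω > x} ≤ lam}.Nonempty)
    (hbdd : BddBelow {x : ℝ | P.real {ω | X ω > x} ≤ lam}) :
    IsMinOn (rockafellarUryasev P X lam) Set.univ (upperQuantile P X lam) :=
  isMinOn_rockafellarUryasev hX (measureReal_gt_upperQuantile_le hne)
    (le_measureReal_ge_upperQuantile hX.aemeasurable hbdd)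

theorem nonempty_setOf_measureReal_gt_le {M lam : ℝ} (hM : ∀ ω, X ω ≤ M) (hlam : 0 ≤ lam) :
    {x : ℝ | P.real {ω | X ω > x} ≤ lam}.Nonempty := by
  refine ⟨M, ?_⟩
  have hempty : {ω | X ω > M} = ∅ := Set.eq_empty_of_forall_notMem fun ω hω => (hM ω).not_gt hω
  simpa [hempty] using hlam

theorem bddBelow_setOf_measureReal_gt_le [IsProbabilityMeasure P] {m lam : ℝ}
    (hm : ∀ ω, m ≤ X ω) (hlam : lam < 1) :
    BddBelow {x : ℝ | P.real {ω | X ω > x} ≤ lam} := by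
  refine ⟨m, fun x (hx : P.real {ω | X ω > x} ≤ lam) => not_lt.1 fun hxm => ?_⟩
  have huniv : {ω | X ω > x} = Set.univ := Set.eq_univ_of_forall fun ω => hxm.trans_le (hm ω)
  rw [huniv, probReal_univ] at hx
  linarith

end

/-- The infimum in the Rockafellar–Uryasev representation is attained at the
upper `λ`-quantile `y_X(λ) = inf {x : P(X > x) ≤ λ}`. -/
theorem infimum_attained_at_upper_quantile {Ω : Type*} [MeasurableSpace Ω]
    (P : Measure Ω) [IsProbabilityMeasure P]
    (X : Ω → ℝ) (hX : Measurable X) (M : ℝ) (hbdd : ∀ ω, |X ω| ≤ M)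
    (lam : ℝ) (hlam : lam ∈ Set.Ioo (0:ℝ) 1) :
    (∫ ω, max (X ω - sInf {x : ℝ | (P {ω | X ω > x}).toReal ≤ lam}) 0 ∂P)
        + lam * sInf {x : ℝ | (P {ω | X ω > x}).toReal ≤ lam}
      = ⨅ y : ℝ, ((∫ ω, max (X ω - y) 0 ∂P) + lam * y) := by
  have hXi : Integrable X P := .of_bound hX.aestronglyMeasurable M (ae_of_all _ hbdd)
  have hmin := isMinOn_rockafellarUryasev_upperQuantile hXi
    (nonempty_setOf_measureReal_gt_le (fun ω => (abs_le.1 (hbdd ω)).2) hlam.1.le)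
    (bddBelow_setOf_measureReal_gt_le (fun ω => (abs_le.1 (hbdd ω)).1) hlam.2)
  exact (ciInf_eq_of_forall_ge_of_forall_gt_exists_lt (isMinOn_univ_iff.1 hmin)
    fun _ h => ⟨_, h⟩).symm
end

section
/- Let ψ be concave increasing on [0,1] with ψ(0)=0, ψ(1)=1 and finite right derivative ψ'₊(0). Then for any two bounded random variables X, Y on a probability space, |∫X dc_ψ − ∫Y dc_ψ| ≤ ψ'₊(0) · ess sup |X − Y|. -/
open MeasureTheory Filter Topology

/-- Signed Choquet integral: ∫₀^∞ c(X > x) dx + ∫_{-∞}^0 (c(X > x) - 1) dx. -/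
noncomputable def choquet {Ω : Type*} [MeasurableSpace Ω]
    (c : Set Ω → ℝ) (X : Ω → ℝ) : ℝ :=
  (∫ x in Set.Ioi (0:ℝ), c {ω | X ω > x}) +
    ∫ x in Set.Iio (0:ℝ), (c {ω | X ω > x} - 1)

open Set in
/-- Representation of a "signed Choquet"-type functional as an integral over a finite
interval, for an antitone function which is `0` on `[K,∞)` and `1` on `(-∞,-K]`. -/
lemma choquet_rep (f : ℝ → ℝ) (hf : Antitone f) (K : ℝ) (hK : 0 < K)
    (hf0 : ∀ x, K ≤ x → f x = 0) (hf1 : ∀ x, x ≤ -K → f x = 1) :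
    ((∫ x in Ioi (0:ℝ), f x) + ∫ x in Iio (0:ℝ), (f x - 1))
      = (∫ x in (-K)..K, f x) - K := by
  have hint : ∀ a b : ℝ, IntegrableOn f (Ioc a b) := fun a b =>
    (hf.intervalIntegrable (a := a) (b := b)).1
  have h1 : (∫ x in Ioi (0:ℝ), f x) = ∫ x in Ioc (0:ℝ) K, f x := by
    rw [← Ioc_union_Ioi_eq_Ioi hK.le,
      setIntegral_union (Ioc_disjoint_Ioi le_rfl) measurableSet_Ioi (hint 0 K)]
    · have hz : EqOn f 0 (Ioi K) := fun x hx => hf0 x (le_of_lt hx)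
      rw [setIntegral_congr_fun measurableSet_Ioi hz]
      simp
    · have hz : EqOn f 0 (Ioi K) := fun x hx => hf0 x (le_of_lt hx)
      exact (integrableOn_congr_fun hz measurableSet_Ioi).mpr (integrableOn_zero)
  have hg1int : ∀ a b : ℝ, IntegrableOn (fun x => f x - 1) (Ioc a b) :=
    fun a b => (hint a b).sub (integrableOn_const (by simp))
  have h2 : (∫ x in Iio (0:ℝ), (f x - 1)) = ∫ x in Ioc (-K) (0:ℝ), (f x - 1) := by
    have hKneg : (-K : ℝ) ≤ 0 := by linarith
    have hz : EqOn (fun x => f x - 1) 0 (Iio (-K)) := fun x hx => by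
      simp [hf1 x (le_of_lt hx)]
    rw [← Iio_union_Ico_eq_Iio hKneg,
      setIntegral_union ((Iio_disjoint_Ici le_rfl).mono_right Ico_subset_Ici_self)
        measurableSet_Ico
        ((integrableOn_congr_fun hz measurableSet_Iio).mpr integrableOn_zero)
        ((hg1int (-K) 0).congr_set_ae Ico_ae_eq_Ioc),
      setIntegral_congr_fun measurableSet_Iio hz,
      setIntegral_congr_set (Ico_ae_eq_Ioc (μ := volume) (a := -K) (b := (0:ℝ)))]
    simp
  have h3 : (∫ x in Ioc (-K) (0:ℝ), (f x - 1))
      = (∫ x in Ioc (-K) (0:ℝ), f x) - K := by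
    rw [integral_sub (hint (-K) 0) (integrableOn_const (by simp))]
    simp [Real.volume_Ioc, hK.le]
  have h4 : (∫ x in Ioc (-K) (0:ℝ), f x) + (∫ x in Ioc (0:ℝ) K, f x)
      = ∫ x in (-K)..K, f x := by
    rw [intervalIntegral.integral_of_le (by linarith : (-K:ℝ) ≤ K),
      ← Ioc_union_Ioc_eq_Ioc (by linarith : (-K:ℝ) ≤ 0) hK.le,
      setIntegral_union (Ioc_disjoint_Ioc.mpr (le_trans (min_le_left _ _) (le_max_right _ _))) measurableSet_Ioc (hint (-K) 0)
        (hint 0 K)]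
  rw [h1, h2, h3]
  linarith [h4]

open Set in
/-- Key one-sided estimate. -/
lemma choquet_shift_bound (g h : ℝ → ℝ) (hg : Antitone g) (hh : Antitone h)
    (t M : ℝ) (ht : 0 ≤ t) (hM : 0 ≤ M)
    (hg0 : ∀ x, M ≤ x → g x = 0) (hh0 : ∀ x, M ≤ x → h x = 0)
    (hg1 : ∀ x, x < -M → g x = 1) (hh1 : ∀ x, x < -M → h x = 1)
    (hgh : ∀ x, g x ≤ h (x - t)) :
    ((∫ x in Ioi (0:ℝ), g x) + ∫ x in Iio (0:ℝ), (g x - 1))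
      ≤ ((∫ x in Ioi (0:ℝ), h x) + ∫ x in Iio (0:ℝ), (h x - 1)) + t := by
  set K : ℝ := M + t + 1 with hKdef
  have hK : 0 < K := by positivity
  have hKM : M < K := by simp [hKdef]; linarith
  have repg := choquet_rep g hg K hK (fun x hx => hg0 x (by linarith))
    (fun x hx => hg1 x (by linarith))
  have reph := choquet_rep h hh K hK (fun x hx => hh0 x (by linarith))
    (fun x hx => hh1 x (by linarith))
  rw [repg, reph]
  have hshift : Antitone (fun x => h (x - t)) := fun a b hab => hh (by linarith)
  -- ∫_{-K}^{K} g ≤ ∫_{-K}^{K} h(x - t)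
  have step1 : (∫ x in (-K)..K, g x) ≤ ∫ x in (-K)..K, h (x - t) :=
    intervalIntegral.integral_mono_on (by linarith)
      hg.intervalIntegrable hshift.intervalIntegrable
      (fun x _ => hgh x)
  have step2 : (∫ x in (-K)..K, h (x - t)) = ∫ x in (-K - t)..(K - t), h x :=
    intervalIntegral.integral_comp_sub_right h t
  have adj1 : (∫ x in (-K - t)..(-K), h x) + (∫ x in (-K)..(K - t), h x)
      = ∫ x in (-K - t)..(K - t), h x :=
    intervalIntegral.integral_add_adjacent_intervals
      hh.intervalIntegrable hh.intervalIntegrable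
  have adj2 : (∫ x in (-K)..(K - t), h x) + (∫ x in (K - t)..K, h x)
      = ∫ x in (-K)..K, h x :=
    intervalIntegral.integral_add_adjacent_intervals
      hh.intervalIntegrable hh.intervalIntegrable
  have e1 : (∫ x in (-K - t)..(-K), h x) = t := by
    have : EqOn h (fun _ => (1:ℝ)) (uIcc (-K - t) (-K)) := by
      intro x hx
      rw [uIcc_of_le (by linarith)] at hx
      exact hh1 x (by rcases hx with ⟨_, hx2⟩; linarith)
    rw [intervalIntegral.integral_congr this]
    simp
  have e2 : (∫ x in (K - t)..K, h x) = 0 := by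
    have : EqOn h (fun _ => (0:ℝ)) (uIcc (K - t) K) := by
      intro x hx
      rw [uIcc_of_le (by linarith)] at hx
      exact hh0 x (by rcases hx with ⟨hx1, _⟩; linarith)
    rw [intervalIntegral.integral_congr this]
    simp
  have : (∫ x in (-K)..K, h (x - t)) = t + ∫ x in (-K)..K, h x := by
    rw [step2, ← adj1, e1, ← adj2, e2]
    ring
  linarith [step1, this]

theorem choquet_lipschitz_sup_norm {Ω : Type*} [MeasurableSpace Ω]
    (P : Measure Ω) [IsProbabilityMeasure P]
    (ψ : ℝ → ℝ) (hψmono : MonotoneOn ψ (Set.Icc (0:ℝ) 1))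
    (hψconc : ConcaveOn ℝ (Set.Icc (0:ℝ) 1) ψ)
    (hψ0 : ψ 0 = 0) (hψ1 : ψ 1 = 1)
    (D0 : ℝ)
    (hD0 : Tendsto (fun s => ψ s / s) (𝓝[>] (0:ℝ)) (𝓝 D0))
    (X Y : Ω → ℝ) (hX : Measurable X) (hY : Measurable Y)
    (M : ℝ) (hXbdd : ∀ ω, |X ω| ≤ M) (hYbdd : ∀ ω, |Y ω| ≤ M) :
    |choquet (fun A => ψ (P A).toReal) X - choquet (fun A => ψ (P A).toReal) Y|
      ≤ D0 * essSup (fun ω => |X ω - Y ω|) P := by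
  classical
  set t : ℝ := essSup (fun ω => |X ω - Y ω|) P with htdef
  set M' : ℝ := max M 0 with hM'def
  have hM' : 0 ≤ M' := le_max_right _ _
  have hXb : ∀ ω, |X ω| ≤ M' := fun ω => (hXbdd ω).trans (le_max_left _ _)
  have hYb : ∀ ω, |Y ω| ≤ M' := fun ω => (hYbdd ω).trans (le_max_left _ _)
  -- probabilities land in [0,1]
  have hmem : ∀ A : Set Ω, (P A).toReal ∈ Set.Icc (0:ℝ) 1 := by
    intro A
    refine ⟨ENNReal.toReal_nonneg, ?_⟩
    calc (P A).toReal ≤ ENNReal.toReal 1 :=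
          ENNReal.toReal_mono ENNReal.one_ne_top prob_le_one
      _ = 1 := by simp
  -- the two survival-type functions
  set g : ℝ → ℝ := fun x => ψ (P {ω | X ω > x}).toReal with hgdef
  set h : ℝ → ℝ := fun x => ψ (P {ω | Y ω > x}).toReal with hhdef
  have hanti : ∀ (Z : Ω → ℝ), Antitone (fun x => ψ (P {ω | Z ω > x}).toReal) := by
    intro Z a b hab
    exact hψmono (hmem _) (hmem _)
      (ENNReal.toReal_mono (measure_ne_top P _)
        (measure_mono (fun ω hω => lt_of_le_of_lt hab hω)))
  have hzero : ∀ (Z : Ω → ℝ), (∀ ω, |Z ω| ≤ M') → ∀ x, M' ≤ x →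
      ψ (P {ω | Z ω > x}).toReal = 0 := by
    intro Z hZ x hx
    have : {ω | Z ω > x} = ∅ := by
      ext ω
      simp only [Set.mem_setOf_eq, Set.mem_empty_iff_false, iff_false, not_lt]
      exact le_trans (le_trans (le_abs_self _) (hZ ω)) hx
    rw [this]
    simp [hψ0]
  have hone : ∀ (Z : Ω → ℝ), (∀ ω, |Z ω| ≤ M') → ∀ x, x < -M' →
      ψ (P {ω | Z ω > x}).toReal = 1 := by
    intro Z hZ x hx
    have : {ω | Z ω > x} = Set.univ := by
      ext ω
      simp only [Set.mem_setOf_eq, Set.mem_univ, iff_true]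
      have : -M' ≤ Z ω := neg_le_of_abs_le (hZ ω)
      linarith
    rw [this]
    simp [hψ1]
  -- a.e. bound from essSup
  have hbdd : IsBoundedUnder (· ≤ ·) (ae P) (fun ω => |X ω - Y ω|) :=
    isBoundedUnder_of ⟨2 * M', fun ω => by
      have := abs_sub (X ω) (Y ω)
      calc |X ω - Y ω| ≤ |X ω| + |Y ω| := abs_sub _ _
        _ ≤ 2 * M' := by linarith [hXb ω, hYb ω]⟩
  have hae : ∀ᵐ ω ∂P, |X ω - Y ω| ≤ t := ae_le_essSup hbdd
  have ht : 0 ≤ t := by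
    obtain ⟨ω, hω⟩ := hae.exists
    exact le_trans (abs_nonneg _) hω
  -- pointwise shift comparison, both directions
  have hshiftle : ∀ (Z W : Ω → ℝ), (∀ᵐ ω ∂P, |Z ω - W ω| ≤ t) → ∀ x,
      ψ (P {ω | Z ω > x}).toReal ≤ ψ (P {ω | W ω > x - t}).toReal := by
    intro Z W hZW x
    refine hψmono (hmem _) (hmem _)
      (ENNReal.toReal_mono (measure_ne_top P _) (measure_mono_ae ?_))
    filter_upwards [hZW] with ω hω hmemZ
    have hZx : Z ω > x := hmemZ
    have habs' := abs_le.mp hω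
    show W ω > x - t
    linarith [habs'.1, habs'.2]
  have haeYX : ∀ᵐ ω ∂P, |Y ω - X ω| ≤ t := by
    filter_upwards [hae] with ω hω
    rwa [abs_sub_comm]
  -- apply the key lemma in both directions
  have key1 := choquet_shift_bound g h (hanti X) (hanti Y) t M' ht hM'
    (hzero X hXb) (hzero Y hYb) (hone X hXb) (hone Y hYb)
    (hshiftle X Y hae)
  have key2 := choquet_shift_bound h g (hanti Y) (hanti X) t M' ht hM'
    (hzero Y hYb) (hzero X hXb) (hone Y hYb) (hone X hXb)
    (hshiftle Y X haeYX)
  have hcX : choquet (fun A => ψ (P A).toReal) X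
      = (∫ x in Set.Ioi (0:ℝ), g x) + ∫ x in Set.Iio (0:ℝ), (g x - 1) := rfl
  have hcY : choquet (fun A => ψ (P A).toReal) Y
      = (∫ x in Set.Ioi (0:ℝ), h x) + ∫ x in Set.Iio (0:ℝ), (h x - 1) := rfl
  have habs : |choquet (fun A => ψ (P A).toReal) X
      - choquet (fun A => ψ (P A).toReal) Y| ≤ t := by
    rw [abs_le, hcX, hcY]
    constructor
    · linarith [key2]
    · linarith [key1]
  -- D0 ≥ 1
  have hD0ge : 1 ≤ D0 := by
    refine ge_of_tendsto hD0 ?_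
    filter_upwards [Ioc_mem_nhdsGT zero_lt_one]
      with s hs
    have hs0 : 0 < s := hs.1
    have hs1 : s ≤ 1 := hs.2
    have hψs : s ≤ ψ s := by
      have := hψconc.2 (Set.mem_Icc.mpr ⟨le_refl 0, zero_le_one⟩)
        (Set.mem_Icc.mpr ⟨zero_le_one, le_refl 1⟩)
        (by linarith : (0:ℝ) ≤ 1 - s) hs0.le (by ring)
      simpa [hψ0, hψ1] using this
    rw [le_div_iff₀ hs0]
    linarith
  calc |choquet (fun A => ψ (P A).toReal) X - choquet (fun A => ψ (P A).toReal) Y|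
      ≤ t := habs
    _ ≤ D0 * t := le_mul_of_one_le_left ht hD0ge
end
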